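/- arXiv:math/0104129 — 4 statements merged into one kernel-verified Lean document; each statement's English description precedes it below -/
import Mathlib

section
/- Let A₁ be a nonzero Banach space, A₂ a Banach space, Z a set, and Δ : Z → A₂* a map with ‖Δ(z)‖ ≤ 1 for all z ∈ Z, such that ‖g‖ = sup_{z ∈ Z} |Δ(z)(g)| for every g ∈ A₂. Let T : A₁ → A₂ be a linear isometry (into). Then the closed unit ball of A₁* equals the weak-* closed convex hull of the set {λ • T*(Δ(z)) : λ ∈ ℂ, |λ| = 1, z ∈ Z}, where T* is the dual (adjoint) map of T. -/
/-! The dual unit ball is weak-* closed and convex and contains every `λ • T*(Δ z)`, which gives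
one inclusion. For the other, a functional `φ` of norm at most one outside the weak-* closed convex
hull is strictly separated from it by a weak-* continuous functional, i.e. by evaluation at some
`f ∈ A₁`. Rotating each `Δ z (T f)` by a unimodular `λ`, the norming property of `Δ` and the
isometry `T` bound `‖f‖` by the separating constant, while `re (φ f) ≤ ‖f‖`. -/

open Metric RCLike

theorem RCLike.norm_le_of_forall_re_mul_le {𝕜 : Type*} [RCLike 𝕜] {c : 𝕜} {u : ℝ}
    (h : ∀ lam : 𝕜, ‖lam‖ = 1 → re (lam * c) ≤ u) : ‖c‖ ≤ u := by
  obtain ⟨lam, hlam, hc⟩ := exists_norm_eq_mul_self c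
  simpa [← hc] using h lam hlam

namespace WeakDual

variable {𝕜 E : Type*}

theorem exists_forall_apply_eq_apply [NontriviallyNormedField 𝕜] [AddCommGroup E]
    [TopologicalSpace E] [Module 𝕜 E] (F : StrongDual 𝕜 (WeakDual 𝕜 E)) :
    ∃ x : E, ∀ m : WeakDual 𝕜 E, F m = m x := by
  obtain ⟨x, rfl⟩ := LinearMap.dualEmbedding_surjective (topDualPairing 𝕜 E) F
  exact ⟨x, fun _ => rfl⟩

variable [RCLike 𝕜] [NormedAddCommGroup E] [NormedSpace 𝕜 E]

-- Mathlib has these for `WeakBilin` and `StrongDual`, but not for the type synonym `WeakDual`.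
instance : IsScalarTower ℝ 𝕜 (WeakDual 𝕜 E) :=
  inferInstanceAs (IsScalarTower ℝ 𝕜 (StrongDual 𝕜 E))

instance : LocallyConvexSpace ℝ (WeakDual 𝕜 E) := WeakBilin.locallyConvexSpace

theorem convex_toStrongDual_preimage_closedBall (r : ℝ) :
    Convex ℝ (toStrongDual ⁻¹' closedBall (0 : StrongDual 𝕜 E) r) :=
  (convex_closedBall 0 r).linear_preimage
    ((toStrongDual : WeakDual 𝕜 E ≃ₗ[𝕜] _).toLinearMap.restrictScalars ℝ)

theorem toStrongDual_preimage_closedBall_subset_closure_convexHull {S : Set (WeakDual 𝕜 E)}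
    (hS : ∀ (x : E) (u : ℝ), (∀ m ∈ S, re (m x) ≤ u) → ‖x‖ ≤ u) :
    toStrongDual ⁻¹' closedBall (0 : StrongDual 𝕜 E) 1 ⊆ closure (convexHull ℝ S) := by
  intro φ hφ
  by_contra hφS
  obtain ⟨F, u, hFS, huφ⟩ := RCLike.geometric_hahn_banach_closed_point (𝕜 := 𝕜)
    (convex_convexHull ℝ S).closure isClosed_closure hφS
  obtain ⟨x, hF⟩ := exists_forall_apply_eq_apply F
  simp only [hF] at hFS huφ
  have hxu : ‖x‖ ≤ u := hS x u fun m hm => (hFS m (subset_closure (subset_convexHull ℝ S hm))).le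
  have hφx : re (φ x) ≤ ‖x‖ := calc
    re (φ x) ≤ ‖toStrongDual φ x‖ := re_le_norm _
    _ ≤ ‖toStrongDual φ‖ * ‖x‖ := (toStrongDual φ).le_opNorm x
    _ ≤ ‖x‖ := mul_le_of_le_one_left (norm_nonneg x) (mem_closedBall_zero_iff.mp hφ)
  linarith

theorem closure_convexHull_eq_toStrongDual_preimage_closedBall {S : Set (WeakDual 𝕜 E)}
    (hS₁ : S ⊆ toStrongDual ⁻¹' closedBall (0 : StrongDual 𝕜 E) 1)
    (hS : ∀ (x : E) (u : ℝ), (∀ m ∈ S, re (m x) ≤ u) → ‖x‖ ≤ u) :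
    closure (convexHull ℝ S) = toStrongDual ⁻¹' closedBall (0 : StrongDual 𝕜 E) 1 := by
  refine subset_antisymm ?_ (toStrongDual_preimage_closedBall_subset_closure_convexHull hS)
  exact closure_minimal (convexHull_min hS₁ (convex_toStrongDual_preimage_closedBall 1))
    (isClosed_closedBall 0 1)

end WeakDual

theorem dualBall_eq_weakStar_closedConvexHull_general
    {A₁ A₂ : Type*} [NormedAddCommGroup A₁] [NormedSpace ℂ A₁] [Nontrivial A₁]
    [NormedAddCommGroup A₂] [NormedSpace ℂ A₂]
    {Z : Type*} (Δ : Z → (A₂ →L[ℂ] ℂ))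
    (hΔ1 : ∀ z : Z, ‖Δ z‖ ≤ 1)
    (hΔ2 : ∀ g : A₂, ‖g‖ = ⨆ z : Z, ‖Δ z g‖)
    (T : A₁ →L[ℂ] A₂) (hT : ∀ f : A₁, ‖T f‖ = ‖f‖) :
    (StrongDual.toWeakDual : (A₁ →L[ℂ] ℂ) → WeakDual ℂ A₁) '' Metric.closedBall 0 1 =
      closure (convexHull ℝ
        {m : WeakDual ℂ A₁ | ∃ lam : ℂ, ‖lam‖ = 1 ∧ ∃ z : Z,
          m = StrongDual.toWeakDual (lam • ((Δ z).comp T))}) := by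
  have hZ : Nonempty Z := by
    obtain ⟨f, hf⟩ := exists_ne (0 : A₁)
    by_contra hZ
    rw [not_nonempty_iff] at hZ
    exact hf (norm_eq_zero.mp (by rw [← hT, hΔ2, Real.iSup_of_isEmpty]))
  have hT1 : ‖T‖ ≤ 1 := T.opNorm_le_bound zero_le_one fun f => by rw [hT, one_mul]
  rw [StrongDual.toWeakDual.image_eq_preimage_symm]
  refine (WeakDual.closure_convexHull_eq_toStrongDual_preimage_closedBall ?_ ?_).symm
  · rintro _ ⟨lam, hlam, z, rfl⟩
    rw [Set.mem_preimage, mem_closedBall_zero_iff]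
    calc ‖lam • (Δ z).comp T‖ = ‖(Δ z).comp T‖ := by rw [norm_smul, hlam, one_mul]
      _ ≤ ‖Δ z‖ * ‖T‖ := (Δ z).opNorm_comp_le T
      _ ≤ 1 := mul_le_one₀ (hΔ1 z) (norm_nonneg T) hT1
  · intro f u hu
    rw [← hT, hΔ2]
    exact ciSup_le fun z =>
      RCLike.norm_le_of_forall_re_mul_le fun lam hlam => hu _ ⟨lam, hlam, z, rfl⟩

theorem dualBall_eq_weakStar_closedConvexHull
    {A₁ A₂ : Type*} [NormedAddCommGroup A₁] [NormedSpace ℂ A₁] [CompleteSpace A₁] [Nontrivial A₁]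
    [NormedAddCommGroup A₂] [NormedSpace ℂ A₂] [CompleteSpace A₂]
    {Z : Type*} (Δ : Z → (A₂ →L[ℂ] ℂ))
    (hΔ1 : ∀ z : Z, ‖Δ z‖ ≤ 1)
    (hΔ2 : ∀ g : A₂, ‖g‖ = ⨆ z : Z, ‖Δ z g‖)
    (T : A₁ →L[ℂ] A₂) (hT : ∀ f : A₁, ‖T f‖ = ‖f‖) :
    (StrongDual.toWeakDual : (A₁ →L[ℂ] ℂ) → WeakDual ℂ A₁) '' Metric.closedBall 0 1 =
      closure (convexHull ℝ
        {m : WeakDual ℂ A₁ | ∃ lam : ℂ, ‖lam‖ = 1 ∧ ∃ z : Z,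
          m = StrongDual.toWeakDual (lam • ((Δ z).comp T))}) :=
  dualBall_eq_weakStar_closedConvexHull_general Δ hΔ1 hΔ2 T hT
end

section
/- Let A₁ be a nonzero Banach space, A₂ a Banach space, Z a set, and Δ : Z → A₂* a norming family: ‖Δ(z)‖ ≤ 1 for all z and ‖g‖ = sup_{z∈Z} |Δ(z)(g)| for all g ∈ A₂. Let T : A₁ → A₂ be a linear isometry. Then every extreme point of the closed unit ball of A₁* belongs to T*(C), where C is the weak-* closure in A₂* of the set {λ • Δ(z) : |λ| = 1, z ∈ Z}. -/
/-!
A functional separating a point of the weak-* closed unit ball of `A₁*` from the weak-* closed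
convex hull of `T*(C)` is evaluation at some `f ∈ A₁`; testing it on the rotations `λ • Δ z`
and using that `Δ` is norming and `T` isometric bounds `‖f‖` by the separating constant, which
is absurd. So the ball is that hull, and Milman's theorem puts its extreme points in the weak-*
compact set `T*(C)`.
-/

open NormedSpace

/-- Extreme points of a set `E` in a complex vector space, with the `t ∈ (0,1)` definition. -/
def extremePts {V : Type*} [AddCommGroup V] [Module ℂ V] (E : Set V) : Set V :=
  {v | v ∈ E ∧ ∀ x ∈ E, ∀ y ∈ E, ∀ t : ℝ, 0 < t → t < 1 →
    (t : ℂ) • x + ((1 - t : ℝ) : ℂ) • y = v → x = v ∧ y = v}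

open Set

section Milman

variable {E : Type*} [AddCommGroup E] [Module ℝ E] [TopologicalSpace E] [IsTopologicalAddGroup E]
  [ContinuousSMul ℝ E] {s t : Set E}

theorem IsCompact.convexJoin (hs : IsCompact s) (ht : IsCompact t) :
    IsCompact (_root_.convexJoin ℝ s t) := by
  have : _root_.convexJoin ℝ s t =
      (fun p : ℝ × E × E => (1 - p.1) • p.2.1 + p.1 • p.2.2) '' (Icc 0 1 ×ˢ s ×ˢ t) := by
    ext x
    simp only [mem_convexJoin, segment_eq_image, mem_image, mem_prod, Prod.exists]
    constructor
    · rintro ⟨a, ha, b, hb, θ, hθ, rfl⟩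
      exact ⟨θ, a, b, ⟨hθ, ha, hb⟩, rfl⟩
    · rintro ⟨θ, a, b, ⟨hθ, ha, hb⟩, rfl⟩
      exact ⟨a, ha, b, hb, θ, hθ, rfl⟩
  rw [this]
  exact (isCompact_Icc.prod (hs.prod ht)).image (by fun_prop)

theorem IsCompact.convexHull_union (hs : IsCompact s) (ht : IsCompact t) (hsc : Convex ℝ s)
    (htc : Convex ℝ t) : IsCompact (convexHull ℝ (s ∪ t)) := by
  rcases s.eq_empty_or_nonempty with rfl | hs₀
  · rwa [empty_union, htc.convexHull_eq]
  rcases t.eq_empty_or_nonempty with rfl | ht₀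
  · rwa [union_empty, hsc.convexHull_eq]
  rw [_root_.convexHull_union hs₀ ht₀, hsc.convexHull_eq, htc.convexHull_eq]
  exact hs.convexJoin ht

theorem Finset.isCompact_convexHull_biUnion {ι : Type*} (u : Finset ι) {D : ι → Set E}
    (hD : ∀ i ∈ u, IsCompact (D i)) (hDc : ∀ i ∈ u, Convex ℝ (D i)) :
    IsCompact (convexHull ℝ (⋃ i ∈ u, D i)) := by
  classical
  induction u using Finset.induction_on with
  | empty => simp
  | insert a u _ ih =>
    rw [Finset.set_biUnion_insert, ← convexHull_convexHull_union_right]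
    exact (hD a (mem_insert_self a u)).convexHull_union
      (ih (fun i hi => hD i (mem_insert_of_mem hi)) (fun i hi => hDc i (mem_insert_of_mem hi)))
      (hDc a (mem_insert_self a u)) (convex_convexHull ℝ _)

variable [T2Space E] [LocallyConvexSpace ℝ E]

/-- **Milman's theorem**. -/
theorem IsCompact.mem_of_mem_extremePoints_closure_convexHull {K : Set E} (hK : IsCompact K)
    (hKhull : IsCompact (closure (convexHull ℝ K))) {x : E}
    (hx : x ∈ (closure (convexHull ℝ K)).extremePoints ℝ) : x ∈ K := by
  by_contra hxK
  -- Cut `K` into finitely many compact convex pieces, each inside a closed half-space missing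
  -- `x`; being extreme, `x` would lie in one of the pieces.
  have hsep : ∀ y ∈ K, ∃ (l : StrongDual ℝ E) (c : ℝ), l x < c ∧ c < l y := fun y hy => by
    obtain ⟨l, hl⟩ := geometric_hahn_banach_point_point (ne_of_mem_of_not_mem hy hxK).symm
    exact ⟨l, (l x + l y) / 2, by linarith, by linarith⟩
  choose! l c hlx hly using hsep
  set H := closure (convexHull ℝ K)
  set D : E → Set E := fun y => H ∩ {v | c y ≤ l y v}
  obtain ⟨u, huK, hKu⟩ := hK.elim_nhds_subcover (fun y => {v | c y ≤ l y v}) fun y hy =>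
    Filter.mem_of_superset ((isOpen_lt continuous_const (l y).continuous).mem_nhds (hly y hy))
      fun _ (hv : c y < _) => hv.le
  have hKD : K ⊆ ⋃ y ∈ u, D y := fun v hv => by
    obtain ⟨y, hy, hvy⟩ := mem_iUnion₂.1 (hKu hv)
    exact mem_iUnion₂.2 ⟨y, hy, subset_closure (subset_convexHull ℝ K hv), hvy⟩
  have hDhull : IsCompact (convexHull ℝ (⋃ y ∈ u, D y)) :=
    u.isCompact_convexHull_biUnion
      (fun y _ => hKhull.inter_right (isClosed_le continuous_const (l y).continuous))
      (fun y _ => (convex_convexHull ℝ K).closure.inter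
        (convex_halfSpace_ge (l y).toLinearMap.isLinear (c y)))
  have hHD : H ⊆ convexHull ℝ (⋃ y ∈ u, D y) :=
    closure_minimal (convexHull_mono hKD) hDhull.isClosed
  have hDH : convexHull ℝ (⋃ y ∈ u, D y) ⊆ H :=
    convexHull_min (iUnion₂_subset fun _ _ => inter_subset_left) (convex_convexHull ℝ K).closure
  have hxD : x ∈ (convexHull ℝ (⋃ y ∈ u, D y)).extremePoints ℝ :=
    inter_extremePoints_subset_extremePoints_of_subset hDH ⟨hHD hx.1, hx⟩
  obtain ⟨y, hy, -, hxy⟩ := mem_iUnion₂.1 (extremePoints_convexHull_subset hxD)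
  exact (hlx y (huK y hy)).not_ge hxy

end Milman

namespace WeakDual

variable {𝕜 E : Type*} [RCLike 𝕜] [NormedAddCommGroup E] [NormedSpace 𝕜 E]

instance inst_s8 : IsScalarTower ℝ 𝕜 (WeakDual 𝕜 E) :=
  inferInstanceAs (IsScalarTower ℝ 𝕜 (E →L[𝕜] 𝕜))

instance inst_s8_2 : LocallyConvexSpace ℝ (WeakDual 𝕜 E) :=
  WeakBilin.locallyConvexSpace (B := topDualPairing 𝕜 E)

theorem convex_closedBall (x : StrongDual 𝕜 E) (r : ℝ) :
    Convex ℝ (toStrongDual ⁻¹' Metric.closedBall x r) :=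
  (_root_.convex_closedBall x r).linear_preimage (toStrongDual.restrictScalars ℝ).toLinearMap

theorem exists_eq_eval (φ : StrongDual 𝕜 (WeakDual 𝕜 E)) : ∃ f : E, ∀ m, φ m = m f := by
  obtain ⟨f, rfl⟩ := LinearMap.dualEmbedding_surjective (topDualPairing 𝕜 E) φ
  exact ⟨f, fun _ => rfl⟩

theorem closedBall_subset_closure_convexHull {K : Set (WeakDual 𝕜 E)}
    (hK : ∀ (f : E) (u : ℝ), (∀ m ∈ K, RCLike.re (m f) ≤ u) → ‖f‖ ≤ u) :
    toStrongDual ⁻¹' Metric.closedBall 0 1 ⊆ closure (convexHull ℝ K) := by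
  intro m hm
  by_contra hmK
  obtain ⟨φ, u, hφK, hφm⟩ := RCLike.geometric_hahn_banach_closed_point (𝕜 := 𝕜)
    (E := WeakDual 𝕜 E) (convex_convexHull ℝ K).closure isClosed_closure hmK
  obtain ⟨f, hf⟩ := exists_eq_eval φ
  have hfu : ‖f‖ ≤ u := hK f u fun m' hm' =>
    (hf m' ▸ hφK m' (subset_closure (subset_convexHull ℝ K hm'))).le
  have hmf : RCLike.re (m f) ≤ ‖f‖ := calc
    RCLike.re (m f) ≤ ‖m f‖ := RCLike.re_le_norm _
    _ ≤ ‖toStrongDual m‖ * ‖f‖ := (toStrongDual m).le_opNorm f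
    _ ≤ ‖f‖ := mul_le_of_le_one_left (norm_nonneg f) (by simpa using hm)
  rw [hf] at hφm
  linarith

variable {F : Type*} [NormedAddCommGroup F] [NormedSpace 𝕜 F]

noncomputable def dualMap (T : E →L[𝕜] F) (m : WeakDual 𝕜 F) : WeakDual 𝕜 E :=
  StrongDual.toWeakDual ((toStrongDual m).comp T)

theorem continuous_dualMap (T : E →L[𝕜] F) : Continuous (dualMap T) :=
  continuous_of_continuous_eval fun f => eval_continuous (T f)

theorem mapsTo_dualMap_closedBall {T : E →L[𝕜] F} (hT : ‖T‖ ≤ 1) :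
    MapsTo (dualMap T) (toStrongDual ⁻¹' Metric.closedBall 0 1)
      (toStrongDual ⁻¹' Metric.closedBall 0 1) := fun m hm => by
  simpa [dualMap] using ((toStrongDual m).opNorm_comp_le T).trans
    (mul_le_one₀ (by simpa using hm) (norm_nonneg T) hT)

end WeakDual

theorem StrongDual.toWeakDual_mem_extremePoints {E : Type*} [NormedAddCommGroup E]
    [NormedSpace ℂ E] {s : Set (StrongDual ℂ E)} {ℓ : StrongDual ℂ E} (hℓ : ℓ ∈ extremePts s) :
    toWeakDual ℓ ∈ (WeakDual.toStrongDual ⁻¹' s).extremePoints ℝ := by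
  refine ⟨hℓ.1, fun x hx y hy ⟨a, b, ha, hb, hab, hxy⟩ => ?_⟩
  refine congrArg toWeakDual (hℓ.2 _ hx _ hy a ha (by linarith) ?_).1
  rw [show 1 - a = b by linarith]
  exact congrArg WeakDual.toStrongDual hxy

theorem Complex.exists_norm_eq_one_mul_eq_norm (w : ℂ) : ∃ c : ℂ, ‖c‖ = 1 ∧ c * w = ‖w‖ := by
  refine ⟨exp (↑(-arg w) * I), norm_exp_ofReal_mul_I _, ?_⟩
  nth_rw 2 [← norm_mul_exp_arg_mul_I w]
  rw [mul_left_comm, ← exp_add]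
  simp

theorem norm_le_of_forall_re_mul_le {Z A : Type*} [Nonempty Z] [NormedAddCommGroup A]
    [NormedSpace ℂ A] {Δ : Z → StrongDual ℂ A} {g : A} (hg : ‖g‖ = ⨆ z, ‖Δ z g‖) {u : ℝ}
    (h : ∀ c : ℂ, ‖c‖ = 1 → ∀ z, (c * Δ z g).re ≤ u) : ‖g‖ ≤ u := by
  rw [hg]
  refine ciSup_le fun z => ?_
  obtain ⟨c, hc, hcΔ⟩ := Complex.exists_norm_eq_one_mul_eq_norm (Δ z g)
  simpa [hcΔ] using h c hc z

theorem extreme_point_mem_adjoint_image_of_weakStar_closure_general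
    {A₁ A₂ : Type*} [NormedAddCommGroup A₁] [NormedSpace ℂ A₁] [Nontrivial A₁]
    [NormedAddCommGroup A₂] [NormedSpace ℂ A₂]
    {Z : Type*} (Δ : Z → (A₂ →L[ℂ] ℂ))
    (hΔ1 : ∀ z : Z, ‖Δ z‖ ≤ 1)
    (hΔ2 : ∀ g : A₂, ‖g‖ = ⨆ z : Z, ‖Δ z g‖)
    (T : A₁ →L[ℂ] A₂) (hT : ∀ f : A₁, ‖T f‖ = ‖f‖)
    (ℓ : A₁ →L[ℂ] ℂ) (hℓ : ℓ ∈ extremePts (Metric.closedBall (0 : A₁ →L[ℂ] ℂ) 1)) :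
    ∃ m ∈ closure {m : WeakDual ℂ A₂ | ∃ lam : ℂ, ‖lam‖ = 1 ∧ ∃ z : Z,
        m = StrongDual.toWeakDual (lam • Δ z)},
      ((StrongDual.toWeakDual.symm m : A₂ →L[ℂ] ℂ)).comp T = ℓ := by
  obtain ⟨f₀, hf₀⟩ := exists_ne (0 : A₁)
  have : Nonempty Z := (isEmpty_or_nonempty Z).resolve_left fun _ =>
    hf₀ (norm_eq_zero.1 (by rw [← hT, hΔ2, Real.iSup_of_isEmpty]))
  set S := {m : WeakDual ℂ A₂ | ∃ lam : ℂ, ‖lam‖ = 1 ∧ ∃ z : Z,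
    m = StrongDual.toWeakDual (lam • Δ z)}
  set K := WeakDual.dualMap T '' closure S
  set B₁ := WeakDual.toStrongDual ⁻¹' Metric.closedBall (0 : StrongDual ℂ A₁) 1
  set B₂ := WeakDual.toStrongDual ⁻¹' Metric.closedBall (0 : StrongDual ℂ A₂) 1
  have hSB : closure S ⊆ B₂ := closure_minimal (by
    rintro _ ⟨c, hc, z, rfl⟩
    simpa [B₂, norm_smul, hc] using hΔ1 z) (WeakDual.isClosed_closedBall 0 1)
  have hKB : K ⊆ B₁ := (image_mono hSB).trans (WeakDual.mapsTo_dualMap_closedBall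
    (T.opNorm_le_bound zero_le_one fun f => by rw [hT, one_mul])).image_subset
  have hball : B₁ = closure (convexHull ℝ K) :=
    subset_antisymm
      (WeakDual.closedBall_subset_closure_convexHull fun f u h =>
        hT f ▸ norm_le_of_forall_re_mul_le (hΔ2 (T f)) fun c hc z =>
          h _ ⟨_, subset_closure ⟨c, hc, z, rfl⟩, rfl⟩)
      (closure_minimal (convexHull_min hKB (WeakDual.convex_closedBall 0 1))
        (WeakDual.isClosed_closedBall 0 1))
  have hK : IsCompact K :=
    ((WeakDual.isCompact_closedBall 0 1).of_isClosed_subset isClosed_closure hSB).image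
      (WeakDual.continuous_dualMap T)
  have hℓ' : StrongDual.toWeakDual ℓ ∈ B₁.extremePoints ℝ :=
    StrongDual.toWeakDual_mem_extremePoints hℓ
  rw [hball] at hℓ'
  obtain ⟨m, hm, hmℓ⟩ :=
    hK.mem_of_mem_extremePoints_closure_convexHull (hball ▸ WeakDual.isCompact_closedBall 0 1) hℓ'
  exact ⟨m, hm, StrongDual.toWeakDual.injective hmℓ⟩

theorem extreme_point_mem_adjoint_image_of_weakStar_closure
    {A₁ A₂ : Type*} [NormedAddCommGroup A₁] [NormedSpace ℂ A₁] [CompleteSpace A₁] [Nontrivial A₁]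
    [NormedAddCommGroup A₂] [NormedSpace ℂ A₂] [CompleteSpace A₂]
    {Z : Type*} (Δ : Z → (A₂ →L[ℂ] ℂ))
    (hΔ1 : ∀ z : Z, ‖Δ z‖ ≤ 1)
    (hΔ2 : ∀ g : A₂, ‖g‖ = ⨆ z : Z, ‖Δ z g‖)
    (T : A₁ →L[ℂ] A₂) (hT : ∀ f : A₁, ‖T f‖ = ‖f‖)
    (ℓ : A₁ →L[ℂ] ℂ) (hℓ : ℓ ∈ extremePts (Metric.closedBall (0 : A₁ →L[ℂ] ℂ) 1)) :
    ∃ m ∈ closure {m : WeakDual ℂ A₂ | ∃ lam : ℂ, ‖lam‖ = 1 ∧ ∃ z : Z,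
        m = StrongDual.toWeakDual (lam • Δ z)},
      ((StrongDual.toWeakDual.symm m : A₂ →L[ℂ] ℂ)).comp T = ℓ :=
  extreme_point_mem_adjoint_image_of_weakStar_closure_general Δ hΔ1 hΔ2 T hT ℓ hℓ
end

section
/- Let Y₁, Y₂ be locally compact Hausdorff spaces, U a non-closed subset of Y₂, and π : U → Y₁ a surjective perfect map (with U given the subspace topology). Then for every x₀ in the closure of U in Y₂ with x₀ ∉ U, and for every f ∈ C₀(Y₁; ℂ), the limit of f(π(x)) as x → x₀ within U is 0. -/
open ZeroAtInfty Filter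

theorem tendsto_zero_at_boundary_of_perfect_comp
    {Y₁ Y₂ : Type*} [TopologicalSpace Y₁] [LocallyCompactSpace Y₁] [T2Space Y₁]
    [TopologicalSpace Y₂] [LocallyCompactSpace Y₂] [T2Space Y₂]
    (U : Set Y₂) (hU : ¬ IsClosed U)
    (π : U → Y₁) (hπc : Continuous π) (hπs : Function.Surjective π)
    (hπcl : IsClosedMap π) (hπf : ∀ y : Y₁, IsCompact (π ⁻¹' {y})) :
    ∀ x₀ ∈ closure U, x₀ ∉ U → ∀ f : C₀(Y₁, ℂ),
      Tendsto (fun x : U => f (π x)) (comap (Subtype.val : U → Y₂) (nhds x₀)) (nhds 0) := by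
  intro x₀ hx₀ hx₀U f
  have hprop : IsProperMap π :=
    isProperMap_iff_isClosedMap_and_compact_fibers.mpr ⟨hπc, hπcl, hπf⟩
  have h1 : comap (Subtype.val : U → Y₂) (nhds x₀) ≤ cocompact U := by
    rw [hasBasis_cocompact.ge_iff]
    intro K hK
    rw [mem_comap]
    refine ⟨(Subtype.val '' K)ᶜ, ?_, ?_⟩
    · refine ((hK.image continuous_subtype_val).isClosed.isOpen_compl).mem_nhds ?_
      rintro ⟨⟨x, hx⟩, -, rfl⟩
      exact hx₀U hx
    · intro x hx
      simp only [Set.mem_preimage, Set.mem_compl_iff] at hx ⊢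
      exact fun h => hx ⟨x, h, rfl⟩
  have h2 : Tendsto π (cocompact U) (cocompact Y₁) := by
    rw [Tendsto, hasBasis_cocompact.ge_iff]
    intro K hK
    exact mem_map.mpr ((hprop.isCompact_preimage hK).compl_mem_cocompact)
  exact (f.zero_at_infty').comp (h2.mono_left h1)
end

section
/- Let Y₁, Y₂ be locally compact Hausdorff spaces. Suppose there exist an open subset U of Y₂ and a surjective perfect map π : U → Y₁. Then the map sending f ∈ C₀(Y₁; ℂ) to the function on Y₂ defined by x ↦ f(π(x)) for x ∈ U and x ↦ 0 for x ∉ U is a well-defined linear isometry from C₀(Y₁; ℂ) into C₀(Y₂; ℂ). -/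
open Filter Set Topology

open ZeroAtInfty Classical in

theorem exists_isometric_composition_operator_of_open_perfect_quotient
    {Y₁ Y₂ : Type*} [TopologicalSpace Y₁] [LocallyCompactSpace Y₁] [T2Space Y₁]
    [TopologicalSpace Y₂] [LocallyCompactSpace Y₂] [T2Space Y₂]
    (U : Set Y₂) (hU : IsOpen U)
    (π : U → Y₁) (hπc : Continuous π) (hπs : Function.Surjective π)
    (hπcl : IsClosedMap π) (hπf : ∀ y : Y₁, IsCompact (π ⁻¹' {y})) :
    ∃ T : C₀(Y₁, ℂ) →L[ℂ] C₀(Y₂, ℂ),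
      (∀ f : C₀(Y₁, ℂ), ‖T f‖ = ‖f‖) ∧
      ∀ (f : C₀(Y₁, ℂ)) (x : Y₂),
        (T f) x = if h : x ∈ U then f (π ⟨x, h⟩) else 0 := by
  have hproper : IsProperMap π :=
    isProperMap_iff_isClosedMap_and_compact_fibers.mpr ⟨hπc, hπcl, hπf⟩
  -- π tends cocompact to cocompact
  have hcc : Tendsto π (cocompact U) (cocompact Y₁) := by
    rw [hasBasis_cocompact.tendsto_right_iff]
    intro K hK
    have : IsCompact (π ⁻¹' K) := hproper.isCompact_preimage hK
    filter_upwards [this.compl_mem_cocompact] with u hu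
    exact hu
  -- neighborhoods of points outside U, pulled back to U, refine cocompact U
  have hnhds : ∀ x ∉ U, Filter.comap (Subtype.val : U → Y₂) (𝓝 x) ≤ cocompact U := by
    intro x hx
    rw [hasBasis_cocompact.ge_iff]
    intro K hK
    have hKc : IsCompact (Subtype.val '' K) := hK.image continuous_subtype_val
    have hmem : (Subtype.val '' K)ᶜ ∈ 𝓝 x :=
      hKc.isClosed.isOpen_compl.mem_nhds (fun h => hx (by
        rcases h with ⟨u, _, rfl⟩; exact u.2))
    refine mem_comap.mpr ⟨(Subtype.val '' K)ᶜ, hmem, ?_⟩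
    intro u hu hK'
    exact hu (mem_image_of_mem _ hK')
  -- the extension
  set g : C₀(Y₁, ℂ) → Y₂ → ℂ := fun f x => if h : x ∈ U then f (π ⟨x, h⟩) else 0 with hg
  have hrestrict : ∀ f : C₀(Y₁, ℂ), ∀ u : U, g f u = f (π u) := by
    intro f u; simp [hg, u.2]
  have hcont : ∀ f : C₀(Y₁, ℂ), Continuous (g f) := by
    intro f
    rw [continuous_iff_continuousAt]
    intro x
    by_cases hx : x ∈ U
    · have hoe := hU.isOpenEmbedding_subtypeVal
      have : ContinuousAt (g f ∘ Subtype.val) (⟨x, hx⟩ : U) := by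
        have : (g f ∘ Subtype.val) = (f ∘ π : U → ℂ) := funext fun u => hrestrict f u
        rw [this]
        exact ((map_continuous f).comp hπc).continuousAt
      exact (hoe.continuousAt_iff.mp this)
    · have hzero : Tendsto (f ∘ π) (Filter.comap (Subtype.val : U → Y₂) (𝓝 x)) (𝓝 0) :=
        ((zero_at_infty f).comp hcc).mono_left (hnhds x hx)
      have hgx : g f x = 0 := by simp [hg, hx]
      rw [ContinuousAt, hgx]
      intro S hS
      rcases mem_comap.mp (hzero hS) with ⟨V, hV, hVsub⟩
      rw [mem_map]
      filter_upwards [hV] with v hv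
      by_cases hvU : v ∈ U
      · have : (f ∘ π) ⟨v, hvU⟩ ∈ S := hVsub hv
        simpa [hg, hvU] using this
      · simpa [hg, hvU] using mem_of_mem_nhds hS
  have hzai : ∀ f : C₀(Y₁, ℂ), Tendsto (g f) (cocompact Y₂) (𝓝 0) := by
    intro f
    intro S hS
    have : Tendsto (f ∘ π) (cocompact U) (𝓝 0) := (zero_at_infty f).comp hcc
    rcases hasBasis_cocompact.mem_iff.mp (this hS) with ⟨K, hK, hKsub⟩
    have hKc : IsCompact (Subtype.val '' K) := hK.image continuous_subtype_val
    rw [mem_map]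
    refine mem_of_superset hKc.compl_mem_cocompact ?_
    intro x hx
    · 
      by_cases hxU : x ∈ U
      · have : (⟨x, hxU⟩ : U) ∈ Kᶜ := fun hmem => hx (mem_image_of_mem _ hmem)
        have := hKsub this
        simpa [hg, hxU] using this
      · simpa [hg, hxU] using mem_of_mem_nhds hS
  set G : C₀(Y₁, ℂ) → C₀(Y₂, ℂ) := fun f =>
    ⟨⟨g f, hcont f⟩, hzai f⟩ with hG
  have hGapp : ∀ f x, G f x = g f x := fun f x => rfl
  have hnorm : ∀ f, ‖G f‖ = ‖f‖ := by
    intro f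
    apply le_antisymm
    · rw [← ZeroAtInftyContinuousMap.norm_toBCF_eq_norm,
        ← ZeroAtInftyContinuousMap.norm_toBCF_eq_norm]
      apply BoundedContinuousFunction.norm_le (norm_nonneg _) |>.mpr
      intro x
      by_cases hx : x ∈ U
      · have : (G f).toBCF x = f (π ⟨x, hx⟩) := by simp [hGapp, hg, hx]
        rw [this]
        exact (f.toBCF.norm_coe_le_norm _)
      · have : (G f).toBCF x = 0 := by simp [hGapp, hg, hx]
        simp [this]
    · rw [← ZeroAtInftyContinuousMap.norm_toBCF_eq_norm,
        ← ZeroAtInftyContinuousMap.norm_toBCF_eq_norm]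
      apply BoundedContinuousFunction.norm_le (norm_nonneg _) |>.mpr
      intro y
      rcases hπs y with ⟨u, rfl⟩
      have : f.toBCF (π u) = (G f).toBCF u := by simp [hGapp, hg, u.2]
      rw [this]
      exact ((G f).toBCF.norm_coe_le_norm _)
  set L : C₀(Y₁, ℂ) →ₗ[ℂ] C₀(Y₂, ℂ) :=
    { toFun := G
      map_add' := by
        intro f₁ f₂
        ext x
        simp only [hGapp, hg, ZeroAtInftyContinuousMap.coe_add, Pi.add_apply]
        by_cases hx : x ∈ U <;> simp [hx]
      map_smul' := by
        intro c f
        ext x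
        simp only [hGapp, hg, ZeroAtInftyContinuousMap.coe_smul, Pi.smul_apply]
        by_cases hx : x ∈ U <;> simp [hx] } with hL
  refine ⟨L.mkContinuous 1 (fun f => by rw [show L f = G f from rfl, hnorm]; simp), ?_, ?_⟩
  · intro f
    rw [LinearMap.mkContinuous_apply]
    exact hnorm f
  · intro f x
    rw [LinearMap.mkContinuous_apply]
    rfl
end
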